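/- Action of the new vector fields on free-transport pullbacks: let f : ℝ × ℝ³ → ℝ be C¹, fix t ∈ ℝ, and set g(x,v) := f(t, x + v̂ t). Then for all x ∈ ℝ³, all v ∈ ℝ³ with v ≠ 0, and i = 1,2,3: (i) Ŝᵛ g(x,v) = d̃(t,x,v) (1+|v|²)^{−1/2} (ṽ·∇ₓf)(t, x + v̂ t); (ii) Ω̂ᵢᵛ g(x,v) = √(1+|v|²) d̃(t,x,v) (Ṽᵢ·∇ₓf)(t, x + v̂ t); (iii) K_{v_i} g(x,v) = (1+|v|²) d̃(t,x,v) (∂_{v_i}v̂ · ∇ₓ f)(t, x + v̂ t); (iv) Ω̃ᵢ g(x,v) = ((eᵢ×x')·∇ₓ f)(t, x') evaluated at x' = x + v̂ t, i.e. Ω̃ᵢ g(x,v) = (Ωᵢ f)(t, x + v̂ t) with Ωᵢ = (eᵢ×x)·∇ₓ. -/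

import Mathlib

noncomputable section

open MeasureTheory

abbrev E3 : Type := EuclideanSpace ℝ (Fin 3)

/-- Euclidean dot product on `ℝ³`. -/
def dot (x y : E3) : ℝ := ∑ i, x i * y i

/-- Standard basis vectors of `ℝ³`. -/
def ee (i : Fin 3) : E3 := EuclideanSpace.single i 1

def mkE3 (f : Fin 3 → ℝ) : E3 := (WithLp.equiv 2 (Fin 3 → ℝ)).symm f

/-- Cross product on `ℝ³`. -/
def cross (a b : E3) : E3 :=
  mkE3 ![a 1 * b 2 - a 2 * b 1, a 2 * b 0 - a 0 * b 2, a 0 * b 1 - a 1 * b 0]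

/-- Relativistic velocity `v̂ = v/√(1+|v|²)`. -/
def vhat (v : E3) : E3 := (Real.sqrt (1 + ‖v‖ ^ 2))⁻¹ • v

/-- `ṽ = v/|v|`. -/
def tv (v : E3) : E3 := ‖v‖⁻¹ • v

/-- `Ṽᵢ = eᵢ × ṽ`. -/
def tV (i : Fin 3) (v : E3) : E3 := cross (ee i) (tv v)

/-- Bundled properties of the fixed cutoff function `ψ̃`. -/
structure Cutoff (ψ : ℝ → ℝ) : Prop where
  smooth : ContDiff ℝ (⊤ : ℕ∞) ψ
  even : ∀ r : ℝ, ψ (-r) = ψ r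
  mem_Icc : ∀ r : ℝ, ψ r ∈ Set.Icc (0:ℝ) 1
  supp : ∀ r : ℝ, 3/2 < |r| → ψ r = 0
  one : ∀ r : ℝ, |r| ≤ 5/4 → ψ r = 1

def psiK (ψ : ℝ → ℝ) (k : ℤ) (r : ℝ) : ℝ := ψ (r / 2 ^ k) - ψ (r / 2 ^ (k - 1))

def psiLe (ψ : ℝ → ℝ) (k : ℤ) (r : ℝ) : ℝ := ψ (r / 2 ^ k)

def psiGe (ψ : ℝ → ℝ) (k : ℤ) (r : ℝ) : ℝ := 1 - ψ (r / 2 ^ (k - 1))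

def psiGe0 (ψ : ℝ → ℝ) (r : ℝ) : ℝ := 1 - ψ (2 * r)

def omegaP (x v : E3) : ℝ := dot x v + Real.sqrt ((dot x v) ^ 2 + ‖x‖ ^ 2)

def omegaM (x v : E3) : ℝ := dot x v - Real.sqrt ((dot x v) ^ 2 + ‖x‖ ^ 2)

def omegaC (ψ : ℝ → ℝ) (x v : E3) : ℝ := psiGe0 ψ (‖x‖ ^ 2 + (dot x v) ^ 2) * omegaP x v

/-- The inhomogeneous modulation `d̃(t,x,v)`. -/
def dmod (ψ : ℝ → ℝ) (t : ℝ) (x v : E3) : ℝ :=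
  t / (1 + ‖v‖ ^ 2) - omegaC ψ x v / Real.sqrt (1 + ‖v‖ ^ 2)

/-- Iterated directional derivatives along a list of directions. -/
def pds {V W : Type*} [NormedAddCommGroup V] [NormedSpace ℝ V]
    [NormedAddCommGroup W] [NormedSpace ℝ W] (ws : List V) (f : V → W) : V → W :=
  ws.foldr (fun w g => fun p => fderiv ℝ g p w) f

/-- Fourier transform `f̂(ξ) = ∫ e^{-ix·ξ} f(x) dx`. -/
def FT (f : E3 → ℂ) (ξ : E3) : ℂ :=
  ∫ x : E3, Complex.exp (-(Complex.I * (dot x ξ : ℂ))) * f x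

/-- Inverse Fourier transform. -/
def FTinv (g : E3 → ℂ) (x : E3) : ℂ :=
  (((2 * Real.pi) ^ 3 : ℝ))⁻¹ • ∫ ξ : E3, Complex.exp (Complex.I * (dot x ξ : ℂ)) * g ξ

/-- Fourier transform in `x` of a function of `(x,v)`. -/
def FTx (f : E3 × E3 → ℂ) (ξ v : E3) : ℂ :=
  ∫ x : E3, Complex.exp (-(Complex.I * (dot x ξ : ℂ))) * f (x, v)

/-- `L²` norm. -/
def L2 {α W : Type*} [MeasureSpace α] [NormedAddCommGroup W] (f : α → W) : ℝ :=
  (∫ x, ‖f x‖ ^ 2) ^ ((1:ℝ)/2)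

/-- The symbol norm `‖m‖_{S^∞_k}` (with multi-indices encoded as tuples of directions). -/
def Snorm (ψ : ℝ → ℝ) (m : E3 → ℂ) (k : ℤ) : ℝ :=
  ∑ n ∈ Finset.range 11, ∑ α : Fin n → Fin 3,
    (2:ℝ) ^ ((n : ℤ) * k) *
      ∫ x : E3, ‖FTinv (fun ξ => pds ((List.ofFn α).map ee) m ξ * (psiK ψ k ‖ξ‖ : ℂ)) x‖

/-- The `X_n` norm of the paper (real-valued version). -/
def XnormR (ψ : ℝ → ℝ) (n : ℕ) (u : E3 → ℂ) : ℝ :=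
  ⨆ k : ℤ, ⨆ ξ : E3,
    (2:ℝ) ^ (((n:ℤ)+1) * k) * ‖iteratedFDeriv ℝ n (FT u) ξ‖ * |psiK ψ k ‖ξ‖|

/-- The bulk derivative `D_v g = ∇_v g − t ∇_v v̂·∇ₓ g` as an `ℝ³`-valued quantity,
for `g` a function of `(x,v)` (at a fixed time `t`). -/
def DvVec (t : ℝ) (g : E3 × E3 → ℝ) (p : E3 × E3) : E3 :=
  mkE3 fun i => fderiv ℝ g p (-(t • fderiv ℝ vhat p.2 (ee i)), ee i)

/-- `Sᵛ = ṽ·∇_v`. -/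
def Sv (g : E3 × E3 → ℝ) (p : E3 × E3) : ℝ := fderiv ℝ g p (0, tv p.2)

/-- `Sˣ = ṽ·∇ₓ`. -/
def Sx (g : E3 × E3 → ℝ) (p : E3 × E3) : ℝ := fderiv ℝ g p (tv p.2, 0)

/-- `Ωᵢᵛ = Ṽᵢ·∇_v`. -/
def Omv (i : Fin 3) (g : E3 × E3 → ℝ) (p : E3 × E3) : ℝ := fderiv ℝ g p (0, tV i p.2)

/-- `Ωᵢˣ = Ṽᵢ·∇ₓ`. -/
def Omx (i : Fin 3) (g : E3 × E3 → ℝ) (p : E3 × E3) : ℝ := fderiv ℝ g p (tV i p.2, 0)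

/-- `Ŝᵛ = Sᵛ − (ω(x,v)/(1+|v|²)) Sˣ`. -/
def hatSv (ψ : ℝ → ℝ) (g : E3 × E3 → ℝ) (p : E3 × E3) : ℝ :=
  Sv g p - (omegaC ψ p.1 p.2 / (1 + ‖p.2‖ ^ 2)) * Sx g p

/-- `Ω̂ᵢᵛ = Ωᵢᵛ − ω(x,v) Ωᵢˣ`. -/
def hatOmv (ψ : ℝ → ℝ) (i : Fin 3) (g : E3 × E3 → ℝ) (p : E3 × E3) : ℝ :=
  Omv i g p - omegaC ψ p.1 p.2 * Omx i g p
/-- `Ω̃ᵢ = Vᵢ·∇_v + Xᵢ·∇ₓ` acting on functions of `(x,v)`. -/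
def OmTilXV (i : Fin 3) (g : E3 × E3 → ℝ) (p : E3 × E3) : ℝ :=
  fderiv ℝ g p (cross (ee i) p.1, cross (ee i) p.2)


namespace Stmt12Aux

lemma s_pos (v : E3) : 0 < Real.sqrt (1 + ‖v‖ ^ 2) := Real.sqrt_pos.2 (by positivity)
lemma s_sq (v : E3) : (Real.sqrt (1 + ‖v‖ ^ 2)) ^ 2 = 1 + ‖v‖ ^ 2 :=
  Real.sq_sqrt (by positivity)

/-- The derivative of `vhat` as a continuous linear map. -/
def Dvh (v : E3) : E3 →L[ℝ] E3 :=
  (Real.sqrt (1 + ‖v‖ ^ 2))⁻¹ • ContinuousLinearMap.id ℝ E3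
    - ((((Real.sqrt (1 + ‖v‖ ^ 2))⁻¹) ^ 3) • (innerSL ℝ v)).smulRight v

lemma Dvh_apply (v w : E3) :
    Dvh v w = (Real.sqrt (1 + ‖v‖ ^ 2))⁻¹ • w
      - ((((Real.sqrt (1 + ‖v‖ ^ 2))⁻¹) ^ 3) * (inner ℝ v w : ℝ)) • v := by
  simp [Dvh, smul_smul]

lemma hasFDerivAt_vhat (v : E3) : HasFDerivAt vhat (Dvh v) v := by
  have hq : HasFDerivAt (fun w : E3 => 1 + ‖w‖ ^ 2) (2 • innerSL ℝ v) v := by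
    simpa using ((hasFDerivAt_id v).norm_sq).const_add 1
  have hs0 : Real.sqrt (1 + ‖v‖ ^ 2) ≠ 0 := (s_pos v).ne'
  have hq0 : (1 : ℝ) + ‖v‖ ^ 2 ≠ 0 := by positivity
  have hsq : HasDerivAt (fun r : ℝ => (Real.sqrt r)⁻¹)
      (-(1 / (2 * Real.sqrt (1 + ‖v‖ ^ 2))) / (Real.sqrt (1 + ‖v‖ ^ 2)) ^ 2) (1 + ‖v‖ ^ 2) := by
    exact (Real.hasDerivAt_sqrt hq0).inv hs0
  have hc : HasFDerivAt (fun w : E3 => (Real.sqrt (1 + ‖w‖ ^ 2))⁻¹)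
      ((-(1 / (2 * Real.sqrt (1 + ‖v‖ ^ 2))) / (Real.sqrt (1 + ‖v‖ ^ 2)) ^ 2) • (2 • innerSL ℝ v))
      v := hsq.comp_hasFDerivAt (f := fun w : E3 => 1 + ‖w‖ ^ 2) v hq
  have h := hc.smul (hasFDerivAt_id v)
  have heq : Dvh v = (Real.sqrt (1 + ‖v‖ ^ 2))⁻¹ • ContinuousLinearMap.id ℝ E3 +
      (((-(1 / (2 * Real.sqrt (1 + ‖v‖ ^ 2))) / (Real.sqrt (1 + ‖v‖ ^ 2)) ^ 2)
        • (2 • innerSL ℝ v)).smulRight v) := by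
    refine ContinuousLinearMap.ext fun w => ?_
    simp only [Dvh, ContinuousLinearMap.add_apply, ContinuousLinearMap.sub_apply,
      ContinuousLinearMap.smul_apply, ContinuousLinearMap.id_apply,
      ContinuousLinearMap.smulRight_apply, smul_eq_mul, ContinuousLinearMap.coe_smul',
      Pi.smul_apply]
    rw [sub_eq_add_neg, ← neg_smul]
    congr 1
    simp only [nsmul_eq_mul]
    congr 1
    set s := Real.sqrt (1 + ‖v‖ ^ 2) with hs
    push_cast
    field_simp
  rw [show vhat = fun w : E3 => (Real.sqrt (1 + ‖w‖ ^ 2))⁻¹ • (id w) from rfl, heq]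
  exact h

lemma inner_cross_self (a v : E3) : (inner ℝ v (cross a v) : ℝ) = 0 := by
  simp only [PiLp.inner_apply, RCLike.inner_apply, conj_trivial, cross, mkE3,
    WithLp.equiv_symm_apply, PiLp.toLp_apply, Fin.sum_univ_three, Matrix.cons_val_zero, Matrix.cons_val_one,
    Matrix.head_cons, Matrix.cons_val_two, Matrix.tail_cons]
  ring

lemma cross_add2 (a b c : E3) : cross a (b + c) = cross a b + cross a c := by
  ext i
  fin_cases i <;>
    simp [cross, mkE3, WithLp.equiv_symm_apply, PiLp.toLp_apply, PiLp.add_apply, Matrix.cons_val_zero,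
      Matrix.cons_val_one, Matrix.head_cons, Matrix.cons_val_two, Matrix.tail_cons] <;> ring

lemma cross_smul2 (a : E3) (r : ℝ) (b : E3) : cross a (r • b) = r • cross a b := by
  ext i
  fin_cases i <;>
    simp [cross, mkE3, WithLp.equiv_symm_apply, PiLp.toLp_apply, PiLp.smul_apply, smul_eq_mul,
      Matrix.cons_val_zero, Matrix.cons_val_one, Matrix.head_cons, Matrix.cons_val_two,
      Matrix.tail_cons] <;> ring

lemma Dvh_of_orth (v w : E3) (h : (inner ℝ v w : ℝ) = 0) :
    Dvh v w = (Real.sqrt (1 + ‖v‖ ^ 2))⁻¹ • w := by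
  rw [Dvh_apply, h]
  simp

lemma Dvh_tv (v : E3) (hv : v ≠ 0) :
    Dvh v (tv v) = (((Real.sqrt (1 + ‖v‖ ^ 2))⁻¹) ^ 3) • tv v := by
  have hnv : ‖v‖ ≠ 0 := norm_ne_zero_iff.2 hv
  have hI : (inner ℝ v (tv v) : ℝ) = ‖v‖ := by
    rw [tv, real_inner_smul_right, real_inner_self_eq_norm_sq]
    field_simp
  rw [Dvh_apply, hI,
    show (((Real.sqrt (1 + ‖v‖ ^ 2))⁻¹ ^ 3) * ‖v‖) • v
        = (((Real.sqrt (1 + ‖v‖ ^ 2))⁻¹ ^ 3) * ‖v‖ ^ 2) • tv v by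
      rw [tv, smul_smul]; congr 1; field_simp,
    ← sub_smul]
  congr 1
  have h2 := s_sq v
  set s := Real.sqrt (1 + ‖v‖ ^ 2) with hs
  have hs0 : s ≠ 0 := (s_pos v).ne'
  field_simp
  linear_combination h2

lemma key (f : ℝ × E3 → ℝ) (hf : ContDiff ℝ 1 f) (t : ℝ) (x v : E3) :
    HasFDerivAt (fun p : E3 × E3 => f (t, p.1 + t • vhat p.2))
      ((fderiv ℝ f (t, x + t • vhat v)).comp
        (((0 : (E3 × E3) →L[ℝ] ℝ)).prod
          (ContinuousLinearMap.fst ℝ E3 E3 + t • (Dvh v).comp (ContinuousLinearMap.snd ℝ E3 E3))))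
      (x, v) := by
  have hphi : HasFDerivAt (fun p : E3 × E3 => ((t, p.1 + t • vhat p.2) : ℝ × E3))
      (((0 : (E3 × E3) →L[ℝ] ℝ)).prod
        (ContinuousLinearMap.fst ℝ E3 E3 + t • (Dvh v).comp (ContinuousLinearMap.snd ℝ E3 E3)))
      (x, v) := by
    refine HasFDerivAt.prodMk (hasFDerivAt_const t (x, v)) ?_
    have h1 := (hasFDerivAt_fst (𝕜 := ℝ) (p := (x, v)))
    have h2 := (((hasFDerivAt_vhat v).comp (x, v) (hasFDerivAt_snd (𝕜 := ℝ) (p := (x, v)))).const_smul t)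
    exact h1.add h2
  exact ((hf.differentiable one_ne_zero (t, x + t • vhat v)).hasFDerivAt).comp (x, v) hphi

lemma key_apply (f : ℝ × E3 → ℝ) (hf : ContDiff ℝ 1 f) (t : ℝ) (x v : E3) (a b : E3) :
    fderiv ℝ (fun p : E3 × E3 => f (t, p.1 + t • vhat p.2)) (x, v) (a, b)
      = fderiv ℝ f (t, x + t • vhat v) (0, a + t • Dvh v b) := by
  rw [(key f hf t x v).fderiv]
  simp [ContinuousLinearMap.comp_apply, ContinuousLinearMap.prod_apply]

lemma smul_dir (f : ℝ × E3 → ℝ) (pt : ℝ × E3) (c : ℝ) (w : E3) :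
    fderiv ℝ f pt (0, c • w) = c * fderiv ℝ f pt (0, w) := by
  have h := (fderiv ℝ f pt).map_smul c ((0 : ℝ), w)
  simpa [Prod.smul_mk, smul_eq_mul] using h

end Stmt12Aux

open Stmt12Aux in
/-- eqns (3.52)–(3.54) in the paper: action of the new vector fields
`Ŝᵛ, Ω̂ᵢᵛ, K_{vᵢ}, Ω̃ᵢ` on pullbacks `g(x,v) = f(t, x + v̂t)` along the free transport flow. -/
theorem stmt_12 (ψ : ℝ → ℝ) (hψ : Cutoff ψ)
    (f : ℝ × E3 → ℝ) (hf : ContDiff ℝ 1 f) (t : ℝ) :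
    ∀ (x v : E3), v ≠ 0 →
      (hatSv ψ (fun p => f (t, p.1 + t • vhat p.2)) (x, v)
        = dmod ψ t x v * (Real.sqrt (1 + ‖v‖ ^ 2))⁻¹ *
            fderiv ℝ f (t, x + t • vhat v) (0, tv v)) ∧
      (∀ i : Fin 3,
        hatOmv ψ i (fun p => f (t, p.1 + t • vhat p.2)) (x, v)
          = Real.sqrt (1 + ‖v‖ ^ 2) * dmod ψ t x v *
              fderiv ℝ f (t, x + t • vhat v) (0, tV i v)) ∧
      (∀ i : Fin 3,
        fderiv ℝ (fun p : E3 × E3 => f (t, p.1 + t • vhat p.2)) (x, v)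
            (-(Real.sqrt (1 + ‖v‖ ^ 2) * omegaC ψ x v) • fderiv ℝ vhat v (ee i), ee i)
          = (1 + ‖v‖ ^ 2) * dmod ψ t x v *
              fderiv ℝ f (t, x + t • vhat v) (0, fderiv ℝ vhat v (ee i))) ∧
      (∀ i : Fin 3,
        OmTilXV i (fun p => f (t, p.1 + t • vhat p.2)) (x, v)
          = fderiv ℝ f (t, x + t • vhat v) (0, cross (ee i) (x + t • vhat v))) := by
  intro x v hv
  have hnv : ‖v‖ ≠ 0 := norm_ne_zero_iff.2 hv
  have hs0 : Real.sqrt (1 + ‖v‖ ^ 2) ≠ 0 := (s_pos v).ne'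
  have h2 := s_sq v
  have happ := key_apply f hf t x v
  have hIV : ∀ i : Fin 3, (inner ℝ v (tV i v) : ℝ) = 0 := by
    intro i
    rw [tV, tv, cross_smul2, real_inner_smul_right, inner_cross_self, mul_zero]
  have hIC : ∀ i : Fin 3, (inner ℝ v (cross (ee i) v) : ℝ) = 0 := fun i => inner_cross_self _ _
  refine ⟨?_, ?_, ?_, ?_⟩
  · -- (i)
    simp only [hatSv, Sv, Sx, happ]
    rw [Dvh_tv v hv, map_zero, smul_zero, add_zero, zero_add, smul_smul,
      smul_dir f (t, x + t • vhat v), dmod]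
    set s := Real.sqrt (1 + ‖v‖ ^ 2) with hs
    set A := fderiv ℝ f (t, x + t • vhat v) (0, tv v)
    rw [show (1 : ℝ) + ‖v‖ ^ 2 = s ^ 2 from h2.symm]
    field_simp
  · -- (ii)
    intro i
    simp only [hatOmv, Omv, Omx, happ]
    rw [Dvh_of_orth v _ (hIV i), map_zero, smul_zero, add_zero, zero_add, smul_smul,
      smul_dir f (t, x + t • vhat v), dmod]
    set s := Real.sqrt (1 + ‖v‖ ^ 2) with hs
    set A := fderiv ℝ f (t, x + t • vhat v) (0, tV i v)
    rw [show (1 : ℝ) + ‖v‖ ^ 2 = s ^ 2 from h2.symm]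
    field_simp
  · -- (iii)
    intro i
    rw [happ, (hasFDerivAt_vhat v).fderiv]
    rw [show -(Real.sqrt (1 + ‖v‖ ^ 2) * omegaC ψ x v) • Dvh v (ee i) + t • Dvh v (ee i)
        = (t - Real.sqrt (1 + ‖v‖ ^ 2) * omegaC ψ x v) • Dvh v (ee i) by module]
    rw [smul_dir f (t, x + t • vhat v), dmod]
    set s := Real.sqrt (1 + ‖v‖ ^ 2) with hs
    set A := fderiv ℝ f (t, x + t • vhat v) (0, Dvh v (ee i))
    rw [show (1 : ℝ) + ‖v‖ ^ 2 = s ^ 2 from h2.symm]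
    field_simp
  · -- (iv)
    intro i
    simp only [OmTilXV, happ]
    congr 2
    rw [Dvh_of_orth v _ (hIC i), cross_add2, vhat, cross_smul2, cross_smul2, smul_smul]
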